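/- Let x = (x₁,x₂) ∈ ℝ² with x ≠ 0 and suppose y = (y₁,y₂,y₃) = μ·(x₁², 2x₁x₂, x₂²) for some μ ∈ ℝ with μ ≠ 0 (i.e. the quadratic form y is a nonzero multiple of the square of the linear form x). Let L be a real Lie algebra with a basis e₁,…,e₆ whose brackets are those of g(x,y). Then L is a nilpotent Lie algebra whose derived algebra [L,L] is 3-dimensional (in particular L is not abelian); it is isomorphic to the 6-dimensional nilpotent Lie algebra with structural equations (0,0,0,12,13,23). -/

import Mathlib

/-!
Group the coordinates of `ℝ⁶ = ℝ³ ⊗ ℝ²` in the pairs `(1,2)`, `(3,4)`, `(5,6)` and let `φ`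
apply the linear form `x` to each pair. When `y = μ (x₁², 2x₁x₂, x₂²)` every structure constant
of `g(x,y)` factors through `φ`, and the bracket becomes `[X, Y] = μ (φX × φY) ⊗ n`, with `×` the
cross product of `ℝ³` and `n = (x₂, -x₁)` spanning `ker φ`. So all brackets lie in `ℝ³ ⊗ n`,
which `φ` kills and which is therefore central. Putting `x` itself (with `φ(x) = |x|² ≠ 0`) into
each of the three pairs gives `f₁, f₂, f₃`; their brackets `f₄, f₅, f₆` span `ℝ³ ⊗ n`, and
together they form a basis with the structure equations `(0,0,0,12,13,23)`.
-/

noncomputable section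

/-- `Wpair i j v w = vᵢwⱼ − vⱼwᵢ`, the evaluation of `eⁱ∧eʲ` on `(v,w)`. -/
def Wpair (i j : Fin 6) (v w : Fin 6 → ℝ) : ℝ := v i * w j - v j * w i

/-- The antisymmetric bilinear bracket of `g(x,y)` on `ℝ⁶`, determined (in 1-based index
notation) by `[e₃,e₅] = (x₁y₂−x₂y₁)e₁ − x₁y₁e₂`, `[e₃,e₆] = [e₄,e₅] = x₁y₃e₁ − x₂y₁e₂`,
`[e₄,e₆] = x₂y₃e₁ + (x₁y₃−x₂y₂)e₂`, `[e₁,e₅] = (x₂y₁−x₁y₂)e₃ + x₁y₁e₄`,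
`[e₁,e₆] = [e₂,e₅] = −x₁y₃e₃ + x₂y₁e₄`, `[e₂,e₆] = −x₂y₃e₃ + (x₂y₂−x₁y₃)e₄`,
`[e₁,e₃] = (x₁y₂−x₂y₁)e₅ − x₁y₁e₆`, `[e₁,e₄] = [e₂,e₃] = x₁y₃e₅ − x₂y₁e₆`,
`[e₂,e₄] = x₂y₃e₅ + (x₁y₃−x₂y₂)e₆`, `[e₁,e₂] = [e₃,e₄] = [e₅,e₆] = 0`. -/
def brXY (x : Fin 2 → ℝ) (y : Fin 3 → ℝ) (v w : Fin 6 → ℝ) : Fin 6 → ℝ :=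
  ![(x 0 * y 1 - x 1 * y 0) * Wpair 2 4 v w + x 0 * y 2 * (Wpair 2 5 v w + Wpair 3 4 v w) +
      x 1 * y 2 * Wpair 3 5 v w,
    -(x 0 * y 0 * Wpair 2 4 v w) - x 1 * y 0 * (Wpair 2 5 v w + Wpair 3 4 v w) +
      (x 0 * y 2 - x 1 * y 1) * Wpair 3 5 v w,
    (x 1 * y 0 - x 0 * y 1) * Wpair 0 4 v w - x 0 * y 2 * (Wpair 0 5 v w + Wpair 1 4 v w) -
      x 1 * y 2 * Wpair 1 5 v w,
    x 0 * y 0 * Wpair 0 4 v w + x 1 * y 0 * (Wpair 0 5 v w + Wpair 1 4 v w) +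
      (x 1 * y 1 - x 0 * y 2) * Wpair 1 5 v w,
    (x 0 * y 1 - x 1 * y 0) * Wpair 0 2 v w + x 0 * y 2 * (Wpair 0 3 v w + Wpair 1 2 v w) +
      x 1 * y 2 * Wpair 1 3 v w,
    -(x 0 * y 0 * Wpair 0 2 v w) - x 1 * y 0 * (Wpair 0 3 v w + Wpair 1 2 v w) +
      (x 0 * y 2 - x 1 * y 1) * Wpair 1 3 v w]

/-- A basis `e` of a real Lie algebra `L` realizes the brackets of `g(x,y)` if the bracket of
any two basis vectors is given by the structure constants of `brXY x y`. -/
def RealizesGXY {L : Type*} [LieRing L] [LieAlgebra ℝ L] (x : Fin 2 → ℝ) (y : Fin 3 → ℝ)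
    (e : Module.Basis (Fin 6) ℝ L) : Prop :=
  ∀ i j : Fin 6, ⁅e i, e j⁆ = ∑ k, brXY x y (Pi.single i 1) (Pi.single j 1) k • e k

open Module

namespace Module.Basis

variable {ι R L : Type*} [Fintype ι] [CommRing R] [LieRing L] [LieAlgebra R L]

theorem lie_mem_of_forall_lie_mem (f : Basis ι R L) {S : Submodule R L}
    (h : ∀ i j, ⁅f i, f j⁆ ∈ S) (u v : L) : ⁅u, v⁆ ∈ S := by
  rw [← f.sum_repr u, ← f.sum_repr v]
  simp only [sum_lie, lie_sum, smul_lie, lie_smul]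
  exact S.sum_mem fun j _ => S.smul_mem _ (S.sum_mem fun i _ => S.smul_mem _ (h i j))

theorem lie_equivFun_symm [DecidableEq ι] (e : Basis ι R L)
    (B : (ι → R) →ₗ[R] (ι → R) →ₗ[R] ι → R)
    (h : ∀ i j, ⁅e i, e j⁆ = e.equivFun.symm (B (Pi.single i 1) (Pi.single j 1)))
    (v w : ι → R) : ⁅e.equivFun.symm v, e.equivFun.symm w⁆ = e.equivFun.symm (B v w) := by
  rw [pi_eq_sum_univ' v, pi_eq_sum_univ' w]
  simp only [map_sum, map_smul, LinearMap.sum_apply, LinearMap.smul_apply, sum_lie, lie_sum,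
    smul_lie, lie_smul, Basis.equivFun_symm_single, h]

end Module.Basis

theorem LieRing.isNilpotent_of_lie_lie_eq_zero {L : Type*} [LieRing L]
    (h : ∀ u v w : L, ⁅u, ⁅v, w⁆⁆ = 0) : LieRing.IsNilpotent L := by
  refine (LieModule.isNilpotent_iff ℤ L L).mpr ⟨2, eq_bot_iff.mpr ?_⟩
  rw [← LieModule.ideal_oper_maxTrivSubmodule_eq_bot ℤ L L ⊤]
  refine LieSubmodule.mono_lie_right ⊤ ((LieSubmodule.lie_le_iff ..).mpr ?_)
  intro v _ w _
  exact (LieModule.mem_maxTrivSubmodule ..).mpr fun u => h u v w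

/-- A basis in which `L` has the structure equations `(0,0,0,12,13,23)`. -/
structure IsFreeTwoStepNilpotentBasis {R L : Type*} [CommRing R] [LieRing L] [LieAlgebra R L]
    (f : Basis (Fin 6) R L) : Prop where
  lie_zero_one : ⁅f 0, f 1⁆ = f 3
  lie_zero_two : ⁅f 0, f 2⁆ = f 4
  lie_one_two : ⁅f 1, f 2⁆ = f 5
  lie_eq_zero : ∀ i j, 3 ≤ j → ⁅f i, f j⁆ = 0

namespace IsFreeTwoStepNilpotentBasis

variable {R L : Type*} [CommRing R] [LieRing L] [LieAlgebra R L] {f : Basis (Fin 6) R L}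

theorem lie_basis_eq_zero (hf : IsFreeTwoStepNilpotentBasis f) (u : L) {j : Fin 6}
    (hj : 3 ≤ j) : ⁅u, f j⁆ = 0 := by
  rw [← f.sum_repr u]
  simp only [sum_lie, smul_lie, hf.lie_eq_zero _ j hj, smul_zero, Finset.sum_const_zero]

theorem lie_mem_span (hf : IsFreeTwoStepNilpotentBasis f) (u v : L) :
    ⁅u, v⁆ ∈ Submodule.span R (Set.range (f ∘ ![3, 4, 5])) := by
  set C := Submodule.span R (Set.range (f ∘ ![3, 4, 5]))
  have h3 : f 3 ∈ C := Submodule.subset_span ⟨0, rfl⟩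
  have h4 : f 4 ∈ C := Submodule.subset_span ⟨1, rfl⟩
  have h5 : f 5 ∈ C := Submodule.subset_span ⟨2, rfl⟩
  refine f.lie_mem_of_forall_lie_mem (fun i j => ?_) u v
  rcases le_or_gt 3 j with hj | hj
  · rw [hf.lie_basis_eq_zero _ hj]
    exact zero_mem C
  rcases le_or_gt 3 i with hi | hi
  · rw [← lie_skew, hf.lie_basis_eq_zero _ hi, neg_zero]
    exact zero_mem C
  fin_cases i <;> fin_cases j <;>
    simp_all [← lie_skew (f 1) (f 0), ← lie_skew (f 2) (f 0), ← lie_skew (f 2) (f 1),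
      hf.lie_zero_one, hf.lie_zero_two, hf.lie_one_two]

theorem lie_eq_zero_of_mem_span (hf : IsFreeTwoStepNilpotentBasis f) (u : L) {w : L}
    (hw : w ∈ Submodule.span R (Set.range (f ∘ ![3, 4, 5]))) : ⁅u, w⁆ = 0 := by
  have hker : Submodule.span R (Set.range (f ∘ ![3, 4, 5])) ≤
      LinearMap.ker (LieAlgebra.ad R L u) :=
    Submodule.span_le.mpr <| Set.range_subset_iff.mpr fun k =>
      hf.lie_basis_eq_zero u (by fin_cases k <;> decide)
  exact hker hw

theorem isNilpotent (hf : IsFreeTwoStepNilpotentBasis f) : LieRing.IsNilpotent L :=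
  LieRing.isNilpotent_of_lie_lie_eq_zero fun u v w =>
    hf.lie_eq_zero_of_mem_span u (hf.lie_mem_span v w)

theorem toSubmodule_lie_top_top (hf : IsFreeTwoStepNilpotentBasis f) :
    (⁅(⊤ : LieIdeal R L), (⊤ : LieIdeal R L)⁆ : LieIdeal R L).toSubmodule =
      Submodule.span R (Set.range (f ∘ ![3, 4, 5])) := by
  have hlie (u v : L) : ⁅u, v⁆ ∈ (⁅(⊤ : LieIdeal R L), (⊤ : LieIdeal R L)⁆ : LieIdeal R L) :=
    LieSubmodule.lie_mem_lie (LieSubmodule.mem_top u) (LieSubmodule.mem_top v)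
  apply le_antisymm
  · rw [LieSubmodule.lieIdeal_oper_eq_linear_span', Submodule.span_le]
    rintro _ ⟨u, -, v, -, rfl⟩
    exact hf.lie_mem_span u v
  · refine Submodule.span_le.mpr <| Set.range_subset_iff.mpr fun k => ?_
    fin_cases k
    · exact (hf.lie_zero_one ▸ hlie _ _ : f 3 ∈ _)
    · exact (hf.lie_zero_two ▸ hlie _ _ : f 4 ∈ _)
    · exact (hf.lie_one_two ▸ hlie _ _ : f 5 ∈ _)

theorem finrank_lie_top_top [Nontrivial R] (hf : IsFreeTwoStepNilpotentBasis f) :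
    finrank R (⁅(⊤ : LieIdeal R L), (⊤ : LieIdeal R L)⁆ : LieIdeal R L) = 3 := by
  change finrank R (⁅(⊤ : LieIdeal R L), (⊤ : LieIdeal R L)⁆ : LieIdeal R L).toSubmodule = 3
  rw [hf.toSubmodule_lie_top_top, finrank_span_eq_card (f.linearIndependent.comp _ (by decide)),
    Fintype.card_fin]

theorem not_isLieAbelian [Nontrivial R] (hf : IsFreeTwoStepNilpotentBasis f) : ¬IsLieAbelian L :=
  fun _ => f.ne_zero 3 (hf.lie_zero_one ▸ trivial_lie_zero L L (f 0) (f 1))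

end IsFreeTwoStepNilpotentBasis

def brXYBilin (x : Fin 2 → ℝ) (y : Fin 3 → ℝ) :
    (Fin 6 → ℝ) →ₗ[ℝ] (Fin 6 → ℝ) →ₗ[ℝ] Fin 6 → ℝ := by
  refine LinearMap.mk₂ ℝ (brXY x y) ?_ ?_ ?_ ?_ <;> intros <;> funext k <;> fin_cases k <;>
    simp only [brXY, Wpair, Pi.add_apply, Pi.smul_apply, smul_eq_mul, Matrix.cons_val,
      Matrix.cons_val_zero, Matrix.cons_val_one, Fin.reduceFinMk, Fin.zero_eta, Fin.mk_one,
      Fin.isValue] <;> ring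

theorem RealizesGXY.lie_equivFun_symm {L : Type*} [LieRing L] [LieAlgebra ℝ L]
    {x : Fin 2 → ℝ} {y : Fin 3 → ℝ} {e : Basis (Fin 6) ℝ L} (he : RealizesGXY x y e)
    (v w : Fin 6 → ℝ) :
    ⁅e.equivFun.symm v, e.equivFun.symm w⁆ = e.equivFun.symm (brXY x y v w) :=
  e.lie_equivFun_symm (brXYBilin x y) (fun i j => (he i j).trans (e.equivFun_symm_apply _).symm)
    v w

-- `c = μ φ(x)²` makes vectors `3, 4, 5` the brackets of vectors `0, 1, 2`.
def gxyFrame (x : Fin 2 → ℝ) (μ : ℝ) : Fin 6 → Fin 6 → ℝ :=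
  let c := μ * (x 0 ^ 2 + x 1 ^ 2) ^ 2
  ![![x 0, x 1, 0, 0, 0, 0], ![0, 0, x 0, x 1, 0, 0], ![0, 0, 0, 0, x 0, x 1],
    ![0, 0, 0, 0, c * x 1, -(c * x 0)], ![0, 0, -(c * x 1), c * x 0, 0, 0],
    ![c * x 1, -(c * x 0), 0, 0, 0, 0]]

section gxyFrame

variable {x : Fin 2 → ℝ} {y : Fin 3 → ℝ} {μ : ℝ}

theorem linearIndependent_gxyFrame (hx : x ≠ 0) (hμ : μ ≠ 0) :
    LinearIndependent ℝ (gxyFrame x μ) := by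
  have hs : x 0 ^ 2 + x 1 ^ 2 ≠ 0 := by
    intro h
    obtain ⟨h0, h1⟩ := (add_eq_zero_iff_of_nonneg (sq_nonneg _) (sq_nonneg _)).mp h
    exact hx (funext (Fin.forall_fin_two.mpr ⟨pow_eq_zero_iff two_ne_zero |>.mp h0,
      pow_eq_zero_iff two_ne_zero |>.mp h1⟩))
  have cancel_s {t : ℝ} (ht : t * (x 0 ^ 2 + x 1 ^ 2) = 0) : t = 0 :=
    (mul_eq_zero.mp ht).resolve_right hs
  have cancel_c {t : ℝ} (ht : t * (μ * (x 0 ^ 2 + x 1 ^ 2) ^ 3) = 0) : t = 0 :=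
    (mul_eq_zero.mp ht).resolve_right (mul_ne_zero hμ (pow_ne_zero 3 hs))
  rw [Fintype.linearIndependent_iff]
  intro g hg
  have h := congrFun hg
  simp only [gxyFrame, Fin.sum_univ_six, Finset.sum_apply, Pi.smul_apply, smul_eq_mul] at h
  have h0 := h 0; have h1 := h 1; have h2 := h 2; have h3 := h 3; have h4 := h 4; have h5 := h 5
  simp only [Matrix.cons_val, Matrix.cons_val_zero, Matrix.cons_val_one, Pi.zero_apply,
    Fin.isValue] at h0 h1 h2 h3 h4 h5
  -- in each coordinate plane the frame has a multiple of `x` and one of `(x₂, -x₁) ⊥ x`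
  intro i
  fin_cases i <;> simp only [Fin.zero_eta, Fin.mk_one, Fin.reduceFinMk]
  · exact cancel_s (by linear_combination x 0 * h0 + x 1 * h1)
  · exact cancel_s (by linear_combination x 0 * h2 + x 1 * h3)
  · exact cancel_s (by linear_combination x 0 * h4 + x 1 * h5)
  · exact cancel_c (by linear_combination x 1 * h4 - x 0 * h5)
  · exact cancel_c (by linear_combination x 0 * h3 - x 1 * h2)
  · exact cancel_c (by linear_combination x 1 * h0 - x 0 * h1)

theorem brXY_gxyFrame (hy : y = μ • ![x 0 ^ 2, 2 * x 0 * x 1, x 1 ^ 2]) :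
    brXY x y (gxyFrame x μ 0) (gxyFrame x μ 1) = gxyFrame x μ 3 ∧
    brXY x y (gxyFrame x μ 0) (gxyFrame x μ 2) = gxyFrame x μ 4 ∧
    brXY x y (gxyFrame x μ 1) (gxyFrame x μ 2) = gxyFrame x μ 5 := by
  subst hy
  refine ⟨?_, ?_, ?_⟩ <;> funext k <;> fin_cases k <;>
    simp only [brXY, Wpair, gxyFrame, Pi.smul_apply, smul_eq_mul, Matrix.cons_val,
      Matrix.cons_val_zero, Matrix.cons_val_one, Fin.reduceFinMk, Fin.zero_eta, Fin.mk_one,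
      Fin.isValue] <;> ring

theorem brXY_gxyFrame_eq_zero (hy : y = μ • ![x 0 ^ 2, 2 * x 0 * x 1, x 1 ^ 2]) (i j : Fin 6)
    (hj : 3 ≤ j) : brXY x y (gxyFrame x μ i) (gxyFrame x μ j) = 0 := by
  subst hy
  fin_cases j <;> (try simp at hj) <;> fin_cases i <;> funext k <;> fin_cases k <;>
    simp only [brXY, Wpair, gxyFrame, Pi.smul_apply, Pi.zero_apply, smul_eq_mul, Matrix.cons_val,
      Matrix.cons_val_zero, Matrix.cons_val_one, Fin.reduceFinMk, Fin.zero_eta, Fin.mk_one,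
      Fin.isValue] <;> ring

end gxyFrame

theorem RealizesGXY.exists_isFreeTwoStepNilpotentBasis {L : Type*} [LieRing L]
    [LieAlgebra ℝ L] {x : Fin 2 → ℝ} {y : Fin 3 → ℝ} {μ : ℝ} {e : Basis (Fin 6) ℝ L}
    (he : RealizesGXY x y e)
    (hx : x ≠ 0) (hμ : μ ≠ 0) (hy : y = μ • ![x 0 ^ 2, 2 * x 0 * x 1, x 1 ^ 2]) :
    ∃ f : Basis (Fin 6) ℝ L, IsFreeTwoStepNilpotentBasis f := by
  let f := (basisOfLinearIndependentOfCardEqFinrank (linearIndependent_gxyFrame hx hμ)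
    (finrank_fin_fun ℝ).symm).map e.equivFun.symm
  have hf (i : Fin 6) : f i = e.equivFun.symm (gxyFrame x μ i) := by
    rw [Basis.map_apply]
    exact congrArg e.equivFun.symm (congrFun (coe_basisOfLinearIndependentOfCardEqFinrank _ _) i)
  obtain ⟨h01, h02, h12⟩ := brXY_gxyFrame hy
  refine ⟨f, ⟨?_, ?_, ?_, fun i j hj => ?_⟩⟩
  · rw [hf, hf, he.lie_equivFun_symm, h01, hf]
  · rw [hf, hf, he.lie_equivFun_symm, h02, hf]
  · rw [hf, hf, he.lie_equivFun_symm, h12, hf]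
  · rw [hf, hf, he.lie_equivFun_symm, brXY_gxyFrame_eq_zero hy i j hj, map_zero]

/-- If `y` is a nonzero multiple of the square of the nonzero linear form `x`, then `g(x,y)` is
nilpotent with 3-dimensional derived algebra, and is isomorphic to the nilpotent Lie algebra
with structural equations `(0,0,0,12,13,23)`. -/
theorem stmt10 (x : Fin 2 → ℝ) (y : Fin 3 → ℝ) (hx : x ≠ 0) (μ : ℝ) (hμ : μ ≠ 0)
    (hy : y = μ • ![x 0 ^ 2, 2 * x 0 * x 1, x 1 ^ 2])
    (L : Type*) [LieRing L] [LieAlgebra ℝ L] (e : Module.Basis (Fin 6) ℝ L)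
    (he : RealizesGXY x y e) :
    LieRing.IsNilpotent L ∧
    Module.finrank ℝ ↥(⁅(⊤ : LieIdeal ℝ L), (⊤ : LieIdeal ℝ L)⁆ : LieIdeal ℝ L) = 3 ∧
    ¬IsLieAbelian L ∧
    -- `L` has a basis realizing the structural equations `(0,0,0,12,13,23)`
    ∃ f : Module.Basis (Fin 6) ℝ L,
      ⁅f 0, f 1⁆ = f 3 ∧ ⁅f 0, f 2⁆ = f 4 ∧ ⁅f 1, f 2⁆ = f 5 ∧
      ⁅f 0, f 3⁆ = 0 ∧ ⁅f 0, f 4⁆ = 0 ∧ ⁅f 0, f 5⁆ = 0 ∧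
      ⁅f 1, f 3⁆ = 0 ∧ ⁅f 1, f 4⁆ = 0 ∧ ⁅f 1, f 5⁆ = 0 ∧
      ⁅f 2, f 3⁆ = 0 ∧ ⁅f 2, f 4⁆ = 0 ∧ ⁅f 2, f 5⁆ = 0 ∧
      ⁅f 3, f 4⁆ = 0 ∧ ⁅f 3, f 5⁆ = 0 ∧ ⁅f 4, f 5⁆ = 0 := by
  obtain ⟨f, hf⟩ := he.exists_isFreeTwoStepNilpotentBasis hx hμ hy
  have hz (i j : Fin 6) (hj : 3 ≤ j := by decide) : ⁅f i, f j⁆ = 0 := hf.lie_eq_zero i j hj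
  exact ⟨hf.isNilpotent, hf.finrank_lie_top_top, hf.not_isLieAbelian, f, hf.lie_zero_one,
    hf.lie_zero_two, hf.lie_one_two, hz 0 3, hz 0 4, hz 0 5, hz 1 3, hz 1 4, hz 1 5, hz 2 3,
    hz 2 4, hz 2 5, hz 3 4, hz 3 5, hz 4 5⟩
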